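/- Fix α > 0 and λ > 1. Let β = (β₁,…,βₙ) and β* = (β₁*,…,βₙ*) be vectors of positive reals such that β is majorized by β*. Then for every x > 0, ∏_{k=1}^{n} (1 - e^{λ(1-e^{x^{β_k}})})^α ≥ ∏_{k=1}^{n} (1 - e^{λ(1-e^{x^{β_k*}})})^α. (In other words, if Xᵢ are independent with Exponentiated Chen distribution F(x;α,βᵢ,λ) and Yᵢ are independent with distribution F(x;α,βᵢ*,λ), then X_{n:n} ≤_st Y_{n:n}.) -/

import Mathlib

/-! Taking logarithms, the claim becomes `∑ₖ φ (βₖ* log x) ≤ ∑ₖ φ (βₖ log x)` for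
`φ s = log (1 - exp (λ (1 - exp (exp s))))`. For `λ ≥ 1` the function `φ` is concave: `φ' s` is
the elasticity `ρ (exp s)` of `u ↦ 1 - exp (λ (1 - eᵘ))`, and `ρ` decreases on `(0, ∞)` by the
bound `2 (1 - e⁻ʷ) ≤ w (1 + e⁻ʷ)`, i.e. `tanh (w / 2) ≤ w / 2`. Hence `t ↦ φ (t log x)` is concave
and Karamata's inequality for `β ≺ β*` concludes; Karamata itself follows from the tangent-line
bound for concave functions and Abel summation. -/

/-- The increasing rearrangement of a finite tuple of reals. -/
noncomputable def sortedAsc {n : ℕ} (a : Fin n → ℝ) : Fin n → ℝ :=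
  a ∘ Tuple.sort a

/-- `a` is majorized by `b`: the total sums agree and every prefix sum of the
increasing rearrangement of `a` is at least the corresponding prefix sum for `b`. -/
noncomputable def MajorizedBy {n : ℕ} (a b : Fin n → ℝ) : Prop :=
  (∑ i, a i = ∑ i, b i) ∧
    ∀ k : ℕ, 1 ≤ k → k ≤ n - 1 →
      ∑ i ∈ Finset.univ.filter (fun i : Fin n => (i : ℕ) < k), sortedAsc a i ≥
        ∑ i ∈ Finset.univ.filter (fun i : Fin n => (i : ℕ) < k), sortedAsc b i

open Real Finset

theorem sum_filter_val_lt_eq_sum_range {M : Type*} [AddCommMonoid M] {n k : ℕ} (hk : k ≤ n)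
    (g : Fin n → M) :
    ∑ i ∈ univ.filter (fun i : Fin n => (i : ℕ) < k), g i =
      ∑ j ∈ range k, if h : j < n then g ⟨j, h⟩ else 0 :=
  sum_bij (fun i _ => i.val) (by simp) (fun _ _ _ _ h => Fin.ext h)
    (fun j hj => ⟨⟨j, by simp at hj; omega⟩, by simpa using hj, rfl⟩) (fun i _ => by simp)

theorem sum_range_mul_nonneg_of_antitone {d A : ℕ → ℝ} {n : ℕ}
    (hd : ∀ i, i + 1 < n → d (i + 1) ≤ d i)
    (hA : ∀ k, k < n → 0 ≤ ∑ i ∈ range k, A i) (hAn : ∑ i ∈ range n, A i = 0) :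
    0 ≤ ∑ i ∈ range n, d i * A i := by
  have hterms : ∑ i ∈ range (n - 1), (d (i + 1) - d i) * ∑ j ∈ range (i + 1), A j ≤ 0 :=
    sum_nonpos fun i hi => by
      have hi : i + 1 < n := by simp at hi; omega
      exact mul_nonpos_of_nonpos_of_nonneg (sub_nonpos.2 (hd i hi)) (hA (i + 1) hi)
  have hparts := sum_range_by_parts d A (n := n)
  simp only [smul_eq_mul, hAn, mul_zero, zero_sub] at hparts
  linarith

theorem MajorizedBy.sum_mul_sub_nonneg {n : ℕ} {a b d : Fin n → ℝ} (hab : MajorizedBy a b)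
    (hd : Antitone d) : 0 ≤ ∑ i, d i * (sortedAsc a i - sortedAsc b i) := by
  set A : Fin n → ℝ := fun i => sortedAsc a i - sortedAsc b i
  let ext : (Fin n → ℝ) → ℕ → ℝ := fun g j => if h : j < n then g ⟨j, h⟩ else 0
  have hfull : univ.filter (fun i : Fin n => (i : ℕ) < n) = univ :=
    filter_true_of_mem fun i _ => i.isLt
  have hsum_sorted (c : Fin n → ℝ) : ∑ i, sortedAsc c i = ∑ i, c i :=
    Equiv.sum_comp (Tuple.sort c) c
  have htotal : ∑ j ∈ range n, ext A j = 0 := by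
    rw [← sum_filter_val_lt_eq_sum_range le_rfl, hfull, sum_sub_distrib, hsum_sorted,
      hsum_sorted, hab.1, sub_self]
  have hprefix : ∀ k, k < n → 0 ≤ ∑ j ∈ range k, ext A j := by
    intro k hk
    rcases Nat.eq_zero_or_pos k with rfl | hk0
    · simp
    rw [← sum_filter_val_lt_eq_sum_range hk.le, sum_sub_distrib, sub_nonneg]
    exact hab.2 k hk0 (by omega)
  have hd_nat : ∀ i, i + 1 < n → ext d (i + 1) ≤ ext d i := fun i hi => by
    simp only [ext, dif_pos hi, dif_pos (by omega : i < n)]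
    exact hd (Fin.mk_le_mk.2 (by omega))
  convert sum_range_mul_nonneg_of_antitone hd_nat hprefix htotal using 1
  rw [← hfull, sum_filter_val_lt_eq_sum_range le_rfl]
  exact sum_congr rfl fun j hj => by simp [ext, mem_range.1 hj, A]

theorem ConcaveOn.le_add_deriv_mul_sub {f : ℝ → ℝ} (hf : ConcaveOn ℝ Set.univ f)
    (hfd : Differentiable ℝ f) (x y : ℝ) : f y ≤ f x + deriv f x * (y - x) := by
  rcases lt_trichotomy x y with hxy | rfl | hxy
  · have hslope := hf.slope_le_deriv trivial trivial hxy (hfd x)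
    rw [slope_def_field, div_le_iff₀ (sub_pos.2 hxy)] at hslope
    linarith
  · simp
  · have hslope := hf.deriv_le_slope trivial trivial hxy (hfd x)
    rw [slope_def_field, le_div_iff₀ (sub_pos.2 hxy)] at hslope
    linarith

theorem ConcaveOn.sum_le_sum_of_majorizedBy {f : ℝ → ℝ} (hf : ConcaveOn ℝ Set.univ f)
    (hfd : Differentiable ℝ f) {n : ℕ} {a b : Fin n → ℝ} (hab : MajorizedBy a b) :
    ∑ i, f (b i) ≤ ∑ i, f (a i) := by
  have hsum_sorted (c : Fin n → ℝ) : ∑ i, f (sortedAsc c i) = ∑ i, f (c i) :=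
    Equiv.sum_comp (Tuple.sort c) (f ∘ c)
  rw [← hsum_sorted a, ← hsum_sorted b]
  set s := sortedAsc a
  set t := sortedAsc b
  have hderiv_anti : Antitone fun i => deriv f (s i) := fun i j hij =>
    hf.antitoneOn_deriv (fun x _ => hfd x) trivial trivial (Tuple.monotone_sort a hij)
  calc ∑ i, f (t i)
      ≤ ∑ i, (f (s i) - deriv f (s i) * (s i - t i)) :=
        sum_le_sum fun i _ => by linarith [hf.le_add_deriv_mul_sub hfd (s i) (t i)]
    _ = ∑ i, f (s i) - ∑ i, deriv f (s i) * (s i - t i) := sum_sub_distrib ..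
    _ ≤ ∑ i, f (s i) := sub_le_self _ (hab.sum_mul_sub_nonneg hderiv_anti)

lemma two_mul_one_sub_exp_neg_le {w : ℝ} (hw : 0 ≤ w) :
    2 * (1 - exp (-w)) ≤ w * (1 + exp (-w)) := by
  have hmono : Monotone fun t => t + (t + 2) * exp (-t) := by
    refine monotone_of_hasDerivAt_nonneg (f' := fun t => 1 - (t + 1) * exp (-t))
      (fun t => ?_) (fun t => ?_)
    · exact ((hasDerivAt_id' t).add (((hasDerivAt_id' t).add_const 2).mul
        (hasDerivAt_neg t).exp)).congr_deriv (by ring)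
    · have : (t + 1) * exp (-t) ≤ 1 := by
        rw [exp_neg, ← div_eq_mul_inv, div_le_one (exp_pos t)]
        linarith [add_one_le_exp t]
      simpa using this
  have h0 := hmono hw
  simp only [neg_zero, exp_zero] at h0
  linarith

lemma one_add_mul_one_sub_exp_le {lam u : ℝ} (hlam : 1 ≤ lam) (hu : 0 ≤ u) :
    (1 + u) * (1 - exp (lam * (1 - exp u))) ≤ lam * u * exp u := by
  set w := lam * (exp u - 1) with hw
  have hwu : u ≤ w := by nlinarith [add_one_le_exp u]
  have htanh_w := two_mul_one_sub_exp_neg_le (hu.trans hwu)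
  have htanh_2u := two_mul_one_sub_exp_neg_le (by positivity : 0 ≤ 2 * u)
  have hexp2u : exp (-(2 * u)) = exp (-u) ^ 2 := by rw [← exp_nat_mul]; ring_nf
  have hinv : exp u * exp (-u) = 1 := by rw [← exp_add, add_neg_cancel, exp_zero]
  calc (1 + u) * (1 - exp (lam * (1 - exp u)))
      = (1 + u) * (1 - exp (-w)) := by rw [hw]; ring_nf
    _ ≤ (1 + u) * (w / 2 * (1 + exp (-w))) := by gcongr; linarith
    _ ≤ (1 + u) * (w / 2 * (1 + exp (-u))) := by gcongr; linarith
    _ = lam / 2 * exp u * ((1 + u) * (1 - exp (-(2 * u)))) := by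
      rw [hexp2u, hw]; linear_combination (lam / 2 * (1 + u) * (1 + exp (-u))) * hinv
    _ ≤ lam / 2 * exp u * (2 * u) := mul_le_mul_of_nonneg_left (by nlinarith) (by positivity)
    _ = lam * u * exp u := by ring

lemma exp_mul_one_sub_exp_lt_one {lam u : ℝ} (hlam : 0 < lam) (hu : 0 < u) :
    exp (lam * (1 - exp u)) < 1 :=
  exp_lt_one_iff.2 (mul_neg_of_pos_of_neg hlam (sub_neg.2 (one_lt_exp_iff.2 hu)))

/-- The elasticity `u G'(u) / G(u)` of `G(u) = 1 - exp (λ (1 - eᵘ))`. -/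
noncomputable def chenCdfElasticity (lam u : ℝ) : ℝ :=
  lam * u * exp u * exp (lam * (1 - exp u)) / (1 - exp (lam * (1 - exp u)))

lemma hasDerivAt_chenCdfElasticity {lam u : ℝ} (hlam : 0 < lam) (hu : 0 < u) :
    HasDerivAt (chenCdfElasticity lam)
      (lam * exp u * exp (lam * (1 - exp u)) *
          ((1 + u) * (1 - exp (lam * (1 - exp u))) - lam * u * exp u) /
        (1 - exp (lam * (1 - exp u))) ^ 2) u := by
  have hg := (((hasDerivAt_exp u).const_sub 1).const_mul lam).exp
  have hnum := (((hasDerivAt_id' u).const_mul lam).mul (hasDerivAt_exp u)).mul hg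
  have hden := hg.const_sub 1
  have hden_ne : 1 - exp (lam * (1 - exp u)) ≠ 0 :=
    (sub_pos.2 (exp_mul_one_sub_exp_lt_one hlam hu)).ne'
  exact (hnum.div hden hden_ne).congr_deriv (by simp only [Pi.mul_apply]; field_simp; ring)

lemma antitoneOn_chenCdfElasticity {lam : ℝ} (hlam : 1 ≤ lam) :
    AntitoneOn (chenCdfElasticity lam) (Set.Ioi 0) := by
  have hlam0 : 0 < lam := by linarith
  refine antitoneOn_of_hasDerivWithinAt_nonpos (convex_Ioi 0) (f' := fun u =>
      lam * exp u * exp (lam * (1 - exp u)) *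
          ((1 + u) * (1 - exp (lam * (1 - exp u))) - lam * u * exp u) /
        (1 - exp (lam * (1 - exp u))) ^ 2)
    (fun u hu => (hasDerivAt_chenCdfElasticity hlam0 hu).continuousAt.continuousWithinAt)
    (fun u hu => ?_) (fun u hu => ?_)
  · rw [interior_Ioi] at hu
    exact (hasDerivAt_chenCdfElasticity hlam0 hu).hasDerivWithinAt
  · rw [interior_Ioi] at hu
    have hkey := one_add_mul_one_sub_exp_le hlam hu.le
    exact div_nonpos_of_nonpos_of_nonneg
      (mul_nonpos_of_nonneg_of_nonpos (by positivity) (by linarith)) (sq_nonneg _)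

/-- `log F` for the Chen distribution function `F(x) = 1 - exp (λ (1 - exp (x ^ β)))`,
as a function of `s = β log x`. -/
noncomputable def chenLogCdf (lam s : ℝ) : ℝ :=
  log (1 - exp (lam * (1 - exp (exp s))))

lemma hasDerivAt_chenLogCdf {lam : ℝ} (hlam : 0 < lam) (s : ℝ) :
    HasDerivAt (chenLogCdf lam) (chenCdfElasticity lam (exp s)) s := by
  have hG := ((((hasDerivAt_exp s).exp).const_sub 1).const_mul lam).exp.const_sub 1
  have hG_ne : 1 - exp (lam * (1 - exp (exp s))) ≠ 0 :=
    (sub_pos.2 (exp_mul_one_sub_exp_lt_one hlam (exp_pos s))).ne'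
  exact (hG.log hG_ne).congr_deriv (by unfold chenCdfElasticity; field_simp)

theorem concaveOn_chenLogCdf {lam : ℝ} (hlam : 1 ≤ lam) :
    ConcaveOn ℝ Set.univ (chenLogCdf lam) := by
  have hderiv := fun s => hasDerivAt_chenLogCdf (by linarith : 0 < lam) s
  refine Antitone.concaveOn_univ_of_deriv (fun s => (hderiv s).differentiableAt) ?_
  intro s t hst
  rw [(hderiv s).deriv, (hderiv t).deriv]
  exact antitoneOn_chenCdfElasticity hlam (exp_pos s) (exp_pos t) (exp_le_exp.2 hst)

lemma chenCdf_rpow_eq_exp {lam x : ℝ} (hlam : 0 < lam) (hx : 0 < x) (α t : ℝ) :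
    (1 - exp (lam * (1 - exp (x ^ t)))) ^ α = exp (α * chenLogCdf lam (log x * t)) := by
  have hpos : 0 < 1 - exp (lam * (1 - exp (x ^ t))) :=
    sub_pos.2 (exp_mul_one_sub_exp_lt_one hlam (rpow_pos_of_pos hx t))
  rw [rpow_def_of_pos hpos, chenLogCdf, ← rpow_def_of_pos hx, mul_comm]

theorem parallel_st_order_beta_general (α lam : ℝ) (hα : 0 < α) (hlam : 1 < lam)
    {n : ℕ} (b bs : Fin n → ℝ)
    (hmaj : MajorizedBy b bs) :
    ∀ x : ℝ, 0 < x →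
      ∏ k, (1 - Real.exp (lam * (1 - Real.exp (x ^ (b k))))) ^ α ≥
        ∏ k, (1 - Real.exp (lam * (1 - Real.exp (x ^ (bs k))))) ^ α := by
  intro x hx
  have hlam0 : 0 < lam := by linarith
  have hconc : ConcaveOn ℝ Set.univ fun t => chenLogCdf lam (log x * t) :=
    (concaveOn_chenLogCdf hlam.le).comp_linearMap (LinearMap.mul ℝ ℝ (log x))
  have hdiff : Differentiable ℝ fun t => chenLogCdf lam (log x * t) := fun t =>
    (hasDerivAt_chenLogCdf hlam0 _).differentiableAt.comp t
      ((differentiable_id.const_mul _) t)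
  simp only [chenCdf_rpow_eq_exp hlam0 hx, ← exp_sum, ← mul_sum]
  exact exp_le_exp.2
    (mul_le_mul_of_nonneg_left (hconc.sum_le_sum_of_majorizedBy hdiff hmaj) hα.le)

/-- Theorem 3: for `λ > 1`, if `β ≺ᵐ β*`, then the distribution function of the
parallel system with Exponentiated Chen components `F(x; α, βᵢ, λ)` is pointwise at
least that of the system with components `F(x; α, βᵢ*, λ)`, i.e. `X_{n:n} ≤_st Y_{n:n}`. -/
theorem parallel_st_order_beta (α lam : ℝ) (hα : 0 < α) (hlam : 1 < lam)
    {n : ℕ} (b bs : Fin n → ℝ)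
    (hb : ∀ i, 0 < b i) (hbs : ∀ i, 0 < bs i) (hmaj : MajorizedBy b bs) :
    ∀ x : ℝ, 0 < x →
      ∏ k, (1 - Real.exp (lam * (1 - Real.exp (x ^ (b k))))) ^ α ≥
        ∏ k, (1 - Real.exp (lam * (1 - Real.exp (x ^ (bs k))))) ^ α :=
  parallel_st_order_beta_general α lam hα hlam b bs hmaj
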